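/- arXiv:2305.05035 — 4 statements merged into one kernel-verified Lean document; each statement's English description precedes it below -/
import Mathlib

section
/- Define the implicative translation τ of an implicative-disjunctive formula by replacing every disjunction B∨C with (B→C)→C (recursively: τ(p)=p, τ(A→B)=τ(A)→τ(B), τ(A∨B)=(τ(A)→τ(B))→τ(B)). Then for every implicative-disjunctive formula A, τ(A) ⊢_id A and A ⊢_id τ(A). -/
inductive IDFrm where
  | atom : Nat → IDFrm
  | imp : IDFrm → IDFrm → IDFrm
  | or : IDFrm → IDFrm → IDFrm

inductive IDDeriv : Set IDFrm → IDFrm → Prop where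
  | hyp {K A} : A ∈ K → IDDeriv K A
  | ax1 {K} (A B : IDFrm) : IDDeriv K (A.imp (B.imp A))
  | ax2 {K} (A B C : IDFrm) : IDDeriv K ((A.imp (B.imp C)).imp ((A.imp B).imp (A.imp C)))
  | ax3 {K} (A B : IDFrm) : IDDeriv K (((A.imp B).imp A).imp A)
  | ax4 {K} (A B : IDFrm) : IDDeriv K (A.imp (A.or B))
  | ax5 {K} (A B : IDFrm) : IDDeriv K (A.imp (B.or A))
  | ax6 {K} (A B C : IDFrm) : IDDeriv K ((A.imp C).imp ((B.imp C).imp ((A.or B).imp C)))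
  | mp {K A B} : IDDeriv K (A.imp B) → IDDeriv K A → IDDeriv K B

def IDFrm.tau : IDFrm → IDFrm
  | .atom n => .atom n
  | .imp A B => (A.tau).imp (B.tau)
  | .or A B => ((A.tau).imp (B.tau)).imp (B.tau)

/-! Induction on the formula. Interderivability is a congruence for `→`, so the only real step
is that `A ∨ B` is interderivable with `(A → B) → B`: one direction is disjunction elimination,
the other is Peirce's law `((A ∨ B → B) → A ∨ B) → A ∨ B`. -/

namespace IDDeriv

variable {K K' : Set IDFrm} {A B : IDFrm}

theorem imp_self (A : IDFrm) : IDDeriv K (A.imp A) :=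
  mp (mp (ax2 A (A.imp A) A) (ax1 A (A.imp A))) (ax1 A A)

theorem mono (hKK' : K ⊆ K') (h : IDDeriv K A) : IDDeriv K' A := by
  induction h with
  | hyp hA => exact hyp (hKK' hA)
  | ax1 => exact ax1 _ _
  | ax2 => exact ax2 _ _ _
  | ax3 => exact ax3 _ _
  | ax4 => exact ax4 _ _
  | ax5 => exact ax5 _ _
  | ax6 => exact ax6 _ _ _
  | mp _ _ ihAB ihA => exact mp ihAB ihA

theorem hyp_insert : IDDeriv (insert A K) A :=
  hyp (Set.mem_insert A K)

theorem hyp_singleton : IDDeriv {A} A :=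
  hyp rfl

theorem insert_of (h : IDDeriv K B) : IDDeriv (insert A K) B :=
  h.mono (Set.subset_insert A K)

theorem deduction (h : IDDeriv (insert A K) B) : IDDeriv K (A.imp B) := by
  generalize hK : insert A K = K' at h
  induction h with
  | hyp hC =>
    subst hK
    rcases hC with rfl | hC
    · exact imp_self _
    · exact mp (ax1 _ _) (hyp hC)
  | ax1 => exact mp (ax1 _ _) (ax1 _ _)
  | ax2 => exact mp (ax1 _ _) (ax2 _ _ _)
  | ax3 => exact mp (ax1 _ _) (ax3 _ _)
  | ax4 => exact mp (ax1 _ _) (ax4 _ _)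
  | ax5 => exact mp (ax1 _ _) (ax5 _ _)
  | ax6 => exact mp (ax1 _ _) (ax6 _ _ _)
  | mp _ _ ihBC ihB => exact mp (mp (ax2 _ _ _) ihBC) ihB

theorem imp_of_singleton (h : IDDeriv {A} B) : IDDeriv K (A.imp B) :=
  deduction (h.mono (Set.singleton_subset_iff.2 (Set.mem_insert A K)))

theorem of_singleton (hAB : IDDeriv {A} B) (hA : IDDeriv K A) : IDDeriv K B :=
  mp (imp_of_singleton hAB) hA

end IDDeriv

namespace IDFrm

open IDDeriv

def Interderivable (A B : IDFrm) : Prop :=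
  IDDeriv {A} B ∧ IDDeriv {B} A

variable {A A' B B' C : IDFrm}

theorem Interderivable.symm (h : Interderivable A B) : Interderivable B A :=
  ⟨h.2, h.1⟩

theorem Interderivable.trans (hAB : Interderivable A B) (hBC : Interderivable B C) :
    Interderivable A C :=
  ⟨of_singleton hBC.1 hAB.1, of_singleton hAB.2 hBC.2⟩

theorem imp_derives_imp (hA : IDDeriv {A'} A) (hB : IDDeriv {B} B') :
    IDDeriv {A.imp B} (A'.imp B') :=
  deduction <| of_singleton hB <| mp (insert_of hyp_singleton) (of_singleton hA hyp_insert)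

theorem Interderivable.imp (hA : Interderivable A A') (hB : Interderivable B B') :
    Interderivable (A.imp B) (A'.imp B') :=
  ⟨imp_derives_imp hA.2 hB.1, imp_derives_imp hA.1 hB.2⟩

theorem or_derives_imp_imp : IDDeriv {A.or B} ((A.imp B).imp B) := by
  have hA : IDDeriv {A.or B} (A.imp ((A.imp B).imp B)) :=
    deduction (deduction (mp hyp_insert (insert_of hyp_insert)))
  exact mp (mp (mp (ax6 A B _) hA) (ax1 B _)) hyp_singleton

theorem imp_imp_derives_or : IDDeriv {(A.imp B).imp B} (A.or B) := by
  refine mp (ax3 (A.or B) B) (deduction ?_)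
  have hAB : IDDeriv (insert ((A.or B).imp B) {(A.imp B).imp B}) (A.imp B) :=
    deduction (mp (insert_of hyp_insert) (mp (ax4 A B) hyp_insert))
  exact mp (ax5 B A) (mp (insert_of hyp_singleton) hAB)

theorem or_interderivable_imp_imp : Interderivable (A.or B) ((A.imp B).imp B) :=
  ⟨or_derives_imp_imp, imp_imp_derives_or⟩

theorem tau_interderivable (A : IDFrm) : Interderivable A.tau A := by
  induction A with
  | atom => exact ⟨hyp_singleton, hyp_singleton⟩
  | imp A B ihA ihB => exact ihA.imp ihB
  | or A B ihA ihB => exact (ihA.imp ihB).imp ihB |>.trans or_interderivable_imp_imp.symm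

end IDFrm

theorem stmt13 (A : IDFrm) :
    IDDeriv {A.tau} A ∧ IDDeriv {A} A.tau :=
  A.tau_interderivable
end

section
/- Completeness of the classical implicative propositional calculus: an implicative formula A is a theorem of the Hilbert system with axiom schemes A→(B→A), (A→(B→C))→((A→B)→(A→C)), ((A→B)→A)→A and modus ponens if and only if A is true under every Boolean valuation of its atoms. -/
inductive IFrm where
  | atom : Nat → IFrm
  | imp : IFrm → IFrm → IFrm

inductive IDeriv : Set IFrm → IFrm → Prop where
  | hyp {K A} : A ∈ K → IDeriv K A
  | ax1 {K} (A B : IFrm) : IDeriv K (A.imp (B.imp A))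
  | ax2 {K} (A B C : IFrm) : IDeriv K ((A.imp (B.imp C)).imp ((A.imp B).imp (A.imp C)))
  | ax3 {K} (A B : IFrm) : IDeriv K (((A.imp B).imp A).imp A)
  | mp {K A B} : IDeriv K (A.imp B) → IDeriv K A → IDeriv K B

def IFrm.eval (v : Nat → Bool) : IFrm → Bool
  | .atom n => v n
  | .imp A B => !(A.eval v) || B.eval v

lemma IDeriv.weaken {K K' : Set IFrm} {B : IFrm} (h : IDeriv K B) (hK : K ⊆ K') :
    IDeriv K' B := by
  induction h with
  | hyp h => exact .hyp (hK h)
  | ax1 A B => exact .ax1 A B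
  | ax2 A B C => exact .ax2 A B C
  | ax3 A B => exact .ax3 A B
  | mp _ _ ih1 ih2 => exact .mp ih1 ih2

lemma IDeriv.id (K : Set IFrm) (B : IFrm) : IDeriv K (B.imp B) :=
  .mp (.mp (.ax2 B (B.imp B) B) (.ax1 B (B.imp B))) (.ax1 B B)

lemma IDeriv.ded {K : Set IFrm} {B C : IFrm} (h : IDeriv (insert B K) C) :
    IDeriv K (B.imp C) := by
  induction h with
  | @hyp D hD =>
    rcases hD with rfl | hD
    · exact .id K D
    · exact .mp (.ax1 D B) (.hyp hD)
  | ax1 X Y => exact .mp (.ax1 _ B) (.ax1 X Y)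
  | ax2 X Y Z => exact .mp (.ax1 _ B) (.ax2 X Y Z)
  | ax3 X Y => exact .mp (.ax1 _ B) (.ax3 X Y)
  | @mp X Y _ _ ih1 ih2 =>
    exact .mp (.mp (.ax2 B X Y) ih1) ih2

lemma IDeriv.finite {K : Set IFrm} {B : IFrm} (h : IDeriv K B) :
    ∃ S : Finset IFrm, ↑S ⊆ K ∧ IDeriv ↑S B := by
  classical
  induction h with
  | @hyp D hD =>
    exact ⟨{D}, by simpa using hD, .hyp (by simp)⟩
  | ax1 X Y => exact ⟨∅, by simp, .ax1 X Y⟩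
  | ax2 X Y Z => exact ⟨∅, by simp, .ax2 X Y Z⟩
  | ax3 X Y => exact ⟨∅, by simp, .ax3 X Y⟩
  | mp _ _ ih1 ih2 =>
    obtain ⟨S1, hS1, d1⟩ := ih1
    obtain ⟨S2, hS2, d2⟩ := ih2
    refine ⟨S1 ∪ S2, ?_, .mp (d1.weaken ?_) (d2.weaken ?_)⟩
    · simp only [Finset.coe_union]
      exact Set.union_subset hS1 hS2
    · simp only [Finset.coe_union]; exact Set.subset_union_left
    · simp only [Finset.coe_union]; exact Set.subset_union_right

lemma IDeriv.sound {K : Set IFrm} {B : IFrm} (h : IDeriv K B) (v : Nat → Bool)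
    (hK : ∀ C ∈ K, C.eval v = true) : B.eval v = true := by
  induction h with
  | hyp hD => exact hK _ hD
  | ax1 X Y => cases hX : X.eval v <;> cases hY : Y.eval v <;> simp_all [IFrm.eval]
  | ax2 X Y Z =>
    cases hX : X.eval v <;> cases hY : Y.eval v <;> cases hZ : Z.eval v <;>
      simp_all [IFrm.eval]
  | ax3 X Y => cases hX : X.eval v <;> cases hY : Y.eval v <;> simp_all [IFrm.eval]
  | mp _ _ ih1 ih2 =>
    simp only [IFrm.eval, ih2, Bool.not_true, Bool.false_or] at ih1
    exact ih1

/-- Key lemma using Peirce: from X→A and (X→Y)→A derive A. -/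
lemma IDeriv.key {K : Set IFrm} {X Y A : IFrm} (h1 : IDeriv K (X.imp A))
    (h2 : IDeriv K ((X.imp Y).imp A)) : IDeriv K A := by
  have hXY : IDeriv (insert (A.imp Y) K) (X.imp Y) := by
    apply IDeriv.ded
    refine .mp (.hyp ?_) (.mp (h1.weaken ?_) (.hyp ?_))
    · exact Set.mem_insert_of_mem _ (Set.mem_insert _ _)
    · exact (Set.subset_insert _ _).trans (Set.subset_insert _ _)
    · exact Set.mem_insert _ _
  have h3 : IDeriv K ((A.imp Y).imp A) :=
    IDeriv.ded (.mp (h2.weaken (Set.subset_insert _ _)) hXY)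
  exact .mp (.ax3 A Y) h3

lemma chain_finset {c : Set (Set IFrm)} (hchain : IsChain (· ⊆ ·) c)
    (hne : c.Nonempty) (S : Finset IFrm) (hS : ↑S ⊆ ⋃₀ c) : ∃ t ∈ c, ↑S ⊆ t := by
  classical
  induction S using Finset.induction with
  | empty => obtain ⟨t, ht⟩ := hne; exact ⟨t, ht, by simp⟩
  | @insert x S hx ih =>
    have hSsub : ↑S ⊆ ⋃₀ c := fun y hy => hS (by simp [hy])
    obtain ⟨t, htc, htS⟩ := ih hSsub
    obtain ⟨u, huc, hxu⟩ := hS (by simp : x ∈ ((insert x S : Finset IFrm) : Set IFrm))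
    rcases hchain.total htc huc with h | h
    · refine ⟨u, huc, ?_⟩
      intro y hy
      simp only [Finset.coe_insert, Set.mem_insert_iff] at hy
      rcases hy with rfl | hy
      · exact hxu
      · exact h (htS hy)
    · refine ⟨t, htc, ?_⟩
      intro y hy
      simp only [Finset.coe_insert, Set.mem_insert_iff] at hy
      rcases hy with rfl | hy
      · exact h hxu
      · exact htS hy

theorem stmt16 (A : IFrm) :
    IDeriv ∅ A ↔ ∀ v : Nat → Bool, A.eval v = true := by
  constructor
  · intro h v
    exact h.sound v (by simp)
  · intro htaut
    by_contra hnd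
    obtain ⟨Γ, -, hΓmax⟩ := zorn_subset_nonempty {K : Set IFrm | ¬ IDeriv K A}
      (fun c hc hchain hne => by
        refine ⟨⋃₀ c, ?_, fun s hs => Set.subset_sUnion_of_mem hs⟩
        intro hder
        obtain ⟨S, hS, dS⟩ := hder.finite
        obtain ⟨t, htc, htS⟩ := chain_finset hchain hne S hS
        exact hc htc (dS.weaken htS)) ∅ hnd
    have hΓsub : ¬ IDeriv Γ A := hΓmax.1
    -- maximality: anything not derivable from Γ gives X → A
    have hmax : ∀ X : IFrm, ¬ IDeriv Γ X → IDeriv Γ (X.imp A) := by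
      intro X hX
      by_cases hmem : IDeriv (insert X Γ) A
      · exact hmem.ded
      · exfalso
        have hsub : insert X Γ ⊆ Γ := hΓmax.2 hmem (Set.subset_insert X Γ)
        exact hX (.hyp (hsub (Set.mem_insert X Γ)))
    classical
    set v : Nat → Bool := fun n => decide (IDeriv Γ (IFrm.atom n)) with hv
    have truth : ∀ X : IFrm, X.eval v = true ↔ IDeriv Γ X := by
      intro X
      induction X with
      | atom n => simp [IFrm.eval, hv]
      | imp X Y ihX ihY =>
        simp only [IFrm.eval, Bool.or_eq_true, Bool.not_eq_true']
        constructor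
        · rintro (hX | hY)
          · have hXA : IDeriv Γ (X.imp A) := hmax X (fun h => by
              rw [← ihX] at h; simp [hX] at h)
            by_contra hXY
            exact hΓsub (IDeriv.key hXA (hmax _ hXY))
          · exact .mp (.ax1 Y X) (ihY.mp hY)
        · intro hXY
          cases hX : X.eval v with
          | false => exact Or.inl rfl
          | true => exact Or.inr (ihY.mpr (.mp hXY (ihX.mp hX)))
    exact hΓsub ((truth A).mp (htaut v))
end

section
/- Completeness of the classical positive propositional calculus: a formula built from atoms using →, ∨, and & is a theorem of the Hilbert system with axiom schemes Ax1–Ax9 and modus ponens if and only if it is a tautology under Boolean valuations. -/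
inductive PFrm where
  | atom : Nat → PFrm
  | imp : PFrm → PFrm → PFrm
  | or : PFrm → PFrm → PFrm
  | and : PFrm → PFrm → PFrm

inductive PDeriv : Set PFrm → PFrm → Prop where
  | hyp {K A} : A ∈ K → PDeriv K A
  | ax1 {K} (A B : PFrm) : PDeriv K (A.imp (B.imp A))
  | ax2 {K} (A B C : PFrm) : PDeriv K ((A.imp (B.imp C)).imp ((A.imp B).imp (A.imp C)))
  | ax3 {K} (A B : PFrm) : PDeriv K (((A.imp B).imp A).imp A)
  | ax4 {K} (A B : PFrm) : PDeriv K (A.imp (A.or B))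
  | ax5 {K} (A B : PFrm) : PDeriv K (A.imp (B.or A))
  | ax6 {K} (A B C : PFrm) : PDeriv K ((A.imp C).imp ((B.imp C).imp ((A.or B).imp C)))
  | ax7 {K} (A B : PFrm) : PDeriv K ((A.and B).imp A)
  | ax8 {K} (A B : PFrm) : PDeriv K ((A.and B).imp B)
  | ax9 {K} (A B : PFrm) : PDeriv K (A.imp (B.imp (A.and B)))
  | mp {K A B} : PDeriv K (A.imp B) → PDeriv K A → PDeriv K B

def PFrm.eval (v : Nat → Bool) : PFrm → Bool
  | .atom n => v n
  | .imp A B => !(A.eval v) || B.eval v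
  | .or A B => A.eval v || B.eval v
  | .and A B => A.eval v && B.eval v


/-!
A Lindenbaum argument with the unprovable formula `A` in the role of falsum. Derivability is
compact, so Zorn's lemma extends `∅` to a set `Δ` maximal among those not deriving `A`. Such a `Δ`
is deductively closed, and `B ∉ Δ` exactly when `Δ ⊢ B → A`. The axioms for `∨` and `&` make
membership in `Δ` commute with these connectives, and Peirce's law does the same for `→`, so
membership in `Δ` is a Boolean valuation; it falsifies `A`, hence `A` is no tautology.
-/

namespace PDeriv

variable {K K' : Set PFrm} {A B C : PFrm}

theorem mono (h : PDeriv K A) (hKK' : K ⊆ K') : PDeriv K' A := by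
  induction h with
  | hyp hA => exact .hyp (hKK' hA)
  | ax1 A B => exact .ax1 A B
  | ax2 A B C => exact .ax2 A B C
  | ax3 A B => exact .ax3 A B
  | ax4 A B => exact .ax4 A B
  | ax5 A B => exact .ax5 A B
  | ax6 A B C => exact .ax6 A B C
  | ax7 A B => exact .ax7 A B
  | ax8 A B => exact .ax8 A B
  | ax9 A B => exact .ax9 A B
  | mp _ _ ih₁ ih₂ => exact .mp ih₁ ih₂

theorem imp_self (K : Set PFrm) (A : PFrm) : PDeriv K (A.imp A) :=
  .mp (.mp (.ax2 A (A.imp A) A) (.ax1 A (A.imp A))) (.ax1 A A)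

theorem deduction (h : PDeriv (insert A K) B) : PDeriv K (A.imp B) := by
  generalize hK : insert A K = K' at h
  induction h with
  | @hyp B hB =>
    subst hK
    rcases hB with rfl | hB
    · exact imp_self K B
    · exact .mp (.ax1 B A) (.hyp hB)
  | ax1 C D => exact .mp (.ax1 _ A) (.ax1 C D)
  | ax2 C D E => exact .mp (.ax1 _ A) (.ax2 C D E)
  | ax3 C D => exact .mp (.ax1 _ A) (.ax3 C D)
  | ax4 C D => exact .mp (.ax1 _ A) (.ax4 C D)
  | ax5 C D => exact .mp (.ax1 _ A) (.ax5 C D)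
  | ax6 C D E => exact .mp (.ax1 _ A) (.ax6 C D E)
  | ax7 C D => exact .mp (.ax1 _ A) (.ax7 C D)
  | ax8 C D => exact .mp (.ax1 _ A) (.ax8 C D)
  | ax9 C D => exact .mp (.ax1 _ A) (.ax9 C D)
  | @mp C D _ _ ih₁ ih₂ => exact .mp (.mp (.ax2 A C D) ih₁) ih₂

theorem exists_mem_of_sUnion {c : Set (Set PFrm)} (hc : DirectedOn (· ⊆ ·) c)
    (hne : c.Nonempty) (h : PDeriv (⋃₀ c) A) : ∃ K ∈ c, PDeriv K A := by
  obtain ⟨K₀, hK₀⟩ := hne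
  induction h with
  | hyp hA =>
    obtain ⟨K, hK, hAK⟩ := hA
    exact ⟨K, hK, .hyp hAK⟩
  | ax1 A B => exact ⟨K₀, hK₀, .ax1 A B⟩
  | ax2 A B C => exact ⟨K₀, hK₀, .ax2 A B C⟩
  | ax3 A B => exact ⟨K₀, hK₀, .ax3 A B⟩
  | ax4 A B => exact ⟨K₀, hK₀, .ax4 A B⟩
  | ax5 A B => exact ⟨K₀, hK₀, .ax5 A B⟩
  | ax6 A B C => exact ⟨K₀, hK₀, .ax6 A B C⟩
  | ax7 A B => exact ⟨K₀, hK₀, .ax7 A B⟩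
  | ax8 A B => exact ⟨K₀, hK₀, .ax8 A B⟩
  | ax9 A B => exact ⟨K₀, hK₀, .ax9 A B⟩
  | mp _ _ ih₁ ih₂ =>
    obtain ⟨K₁, hK₁, h₁⟩ := ih₁
    obtain ⟨K₂, hK₂, h₂⟩ := ih₂
    obtain ⟨K, hK, hK₁K, hK₂K⟩ := hc K₁ hK₁ K₂ hK₂
    exact ⟨K, hK, .mp (h₁.mono hK₁K) (h₂.mono hK₂K)⟩

theorem exists_maximal_not (h : ¬ PDeriv K A) :
    ∃ Δ, K ⊆ Δ ∧ Maximal (fun Γ => ¬ PDeriv Γ A) Δ := by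
  refine zorn_subset_nonempty {Γ | ¬ PDeriv Γ A} (fun c hc hchain hne => ?_) K h
  refine ⟨⋃₀ c, fun hA => ?_, fun Γ hΓ => Set.subset_sUnion_of_mem hΓ⟩
  obtain ⟨Γ, hΓ, hΓA⟩ := exists_mem_of_sUnion hchain.directedOn hne hA
  exact hc hΓ hΓA

/-- Case analysis on `B` through Peirce's law `((A → C) → A) → A`. -/
theorem of_imp_of_imp_imp (h₁ : PDeriv K (B.imp A)) (h₂ : PDeriv K ((B.imp C).imp A)) :
    PDeriv K A := by
  have hBC : PDeriv (insert (A.imp C) K) (B.imp C) := by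
    refine deduction (.mp (.hyp (by simp)) (.mp (h₁.mono ?_) (.hyp (by simp))))
    exact (Set.subset_insert _ _).trans (Set.subset_insert _ _)
  exact .mp (.ax3 A C) (deduction (.mp (h₂.mono (Set.subset_insert _ _)) hBC))

theorem eval_eq_true (h : PDeriv K A) (v : Nat → Bool) (hK : ∀ B ∈ K, B.eval v = true) :
    A.eval v = true := by
  induction h with
  | hyp hB => exact hK _ hB
  | mp _ _ ih₁ ih₂ => simpa [PFrm.eval, ih₂] using ih₁
  | _ => grind [PFrm.eval]

section Maximal

variable {Δ : Set PFrm}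

theorem imp_of_not_mem_of_maximal (hΔ : Maximal (fun Γ => ¬ PDeriv Γ A) Δ)
    (hB : B ∉ Δ) : PDeriv Δ (B.imp A) :=
  deduction (by_contra fun h => hB (hΔ.mem_of_prop_insert h))

theorem mem_of_maximal (hΔ : Maximal (fun Γ => ¬ PDeriv Γ A) Δ)
    (h : PDeriv Δ B) : B ∈ Δ :=
  by_contra fun hB => hΔ.prop (.mp (imp_of_not_mem_of_maximal hΔ hB) h)

theorem imp_mem_iff_of_maximal (hΔ : Maximal (fun Γ => ¬ PDeriv Γ A) Δ) :
    B.imp C ∈ Δ ↔ (B ∈ Δ → C ∈ Δ) := by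
  refine ⟨fun h hB => mem_of_maximal hΔ (.mp (.hyp h) (.hyp hB)), fun h => ?_⟩
  by_cases hB : B ∈ Δ
  · exact mem_of_maximal hΔ (.mp (.ax1 C B) (.hyp (h hB)))
  · by_contra hBC
    exact hΔ.prop (of_imp_of_imp_imp (imp_of_not_mem_of_maximal hΔ hB)
      (imp_of_not_mem_of_maximal hΔ hBC))

theorem or_mem_iff_of_maximal (hΔ : Maximal (fun Γ => ¬ PDeriv Γ A) Δ) :
    B.or C ∈ Δ ↔ B ∈ Δ ∨ C ∈ Δ := by
  refine ⟨fun h => ?_, ?_⟩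
  · by_contra! ⟨hB, hC⟩
    exact hΔ.prop (.mp (.mp (.mp (.ax6 B C A) (imp_of_not_mem_of_maximal hΔ hB))
      (imp_of_not_mem_of_maximal hΔ hC)) (.hyp h))
  · rintro (hB | hC)
    · exact mem_of_maximal hΔ (.mp (.ax4 B C) (.hyp hB))
    · exact mem_of_maximal hΔ (.mp (.ax5 C B) (.hyp hC))

theorem and_mem_iff_of_maximal (hΔ : Maximal (fun Γ => ¬ PDeriv Γ A) Δ) :
    B.and C ∈ Δ ↔ B ∈ Δ ∧ C ∈ Δ :=
  ⟨fun h => ⟨mem_of_maximal hΔ (.mp (.ax7 B C) (.hyp h)),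
      mem_of_maximal hΔ (.mp (.ax8 B C) (.hyp h))⟩,
    fun ⟨hB, hC⟩ => mem_of_maximal hΔ (.mp (.mp (.ax9 B C) (.hyp hB)) (.hyp hC))⟩

theorem mem_iff_eval_of_maximal [DecidablePred (· ∈ Δ)]
    (hΔ : Maximal (fun Γ => ¬ PDeriv Γ A) Δ) (B : PFrm) :
    B ∈ Δ ↔ B.eval (fun n => decide (.atom n ∈ Δ)) = true := by
  induction B with
  | atom n => simp [PFrm.eval]
  | imp B C ihB ihC => simp [PFrm.eval, imp_mem_iff_of_maximal hΔ, ihB, ihC, imp_iff_not_or]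
  | or B C ihB ihC => simp [PFrm.eval, or_mem_iff_of_maximal hΔ, ihB, ihC]
  | and B C ihB ihC => simp [PFrm.eval, and_mem_iff_of_maximal hΔ, ihB, ihC]

end Maximal

end PDeriv

theorem stmt18 (A : PFrm) :
    PDeriv ∅ A ↔ ∀ v : Nat → Bool, A.eval v = true := by
  refine ⟨fun h v => h.eval_eq_true v (by simp), fun hA => ?_⟩
  by_contra hnA
  classical
  obtain ⟨Δ, -, hΔ⟩ := PDeriv.exists_maximal_not hnA
  exact hΔ.prop (.hyp ((PDeriv.mem_iff_eval_of_maximal hΔ A).2 (hA _)))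
end

section
/- For every positive formula A (built from atoms by →, ∨, &) there exist implicative-disjunctive formulas B_1,…,B_n (containing no &) such that A ↔ (B_1 & … & B_n) is a theorem of the classical positive propositional calculus, where A↔B abbreviates (A→B)&(B→A). -/
def PFrm.noAnd : PFrm → Prop
  | .atom _ => True
  | .imp A B => A.noAnd ∧ B.noAnd
  | .or A B => A.noAnd ∧ B.noAnd
  | .and _ _ => False

def PFrm.bigConj (B : PFrm) : List PFrm → PFrm
  | [] => B
  | C :: l => B.and (PFrm.bigConj C l)

def PFrm.iffF (A B : PFrm) : PFrm := (A.imp B).and (B.imp A)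

theorem PDeriv.wk {K K' : Set PFrm} {A : PFrm} (h : PDeriv K A) (hs : K ⊆ K') :
    PDeriv K' A := by
  induction h with
  | hyp hm => exact .hyp (hs hm)
  | ax1 A B => exact .ax1 A B
  | ax2 A B C => exact .ax2 A B C
  | ax3 A B => exact .ax3 A B
  | ax4 A B => exact .ax4 A B
  | ax5 A B => exact .ax5 A B
  | ax6 A B C => exact .ax6 A B C
  | ax7 A B => exact .ax7 A B
  | ax8 A B => exact .ax8 A B
  | ax9 A B => exact .ax9 A B
  | mp _ _ ih1 ih2 => exact .mp ih1 ih2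

namespace PFrm

theorem pid {K : Set PFrm} (A : PFrm) : PDeriv K (A.imp A) :=
  .mp (.mp (.ax2 A (A.imp A) A) (.ax1 A (A.imp A))) (.ax1 A A)

theorem ded {K : Set PFrm} {A B : PFrm} (h : PDeriv (insert A K) B) :
    PDeriv K (A.imp B) := by
  have main : ∀ (S : Set PFrm) (B : PFrm), PDeriv S B →
      ∀ (K : Set PFrm) (A : PFrm), S = insert A K → PDeriv K (A.imp B) := by
    intro S B h
    induction h with
    | hyp hm =>
      intro K A hS
      subst hS
      rcases Set.mem_insert_iff.mp hm with rfl | hm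
      · exact pid _
      · exact .mp (.ax1 _ _) (.hyp hm)
    | ax1 X Y => exact fun K A _ => .mp (.ax1 _ _) (.ax1 X Y)
    | ax2 X Y Z => exact fun K A _ => .mp (.ax1 _ _) (.ax2 X Y Z)
    | ax3 X Y => exact fun K A _ => .mp (.ax1 _ _) (.ax3 X Y)
    | ax4 X Y => exact fun K A _ => .mp (.ax1 _ _) (.ax4 X Y)
    | ax5 X Y => exact fun K A _ => .mp (.ax1 _ _) (.ax5 X Y)
    | ax6 X Y Z => exact fun K A _ => .mp (.ax1 _ _) (.ax6 X Y Z)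
    | ax7 X Y => exact fun K A _ => .mp (.ax1 _ _) (.ax7 X Y)
    | ax8 X Y => exact fun K A _ => .mp (.ax1 _ _) (.ax8 X Y)
    | ax9 X Y => exact fun K A _ => .mp (.ax1 _ _) (.ax9 X Y)
    | mp _ _ ih1 ih2 =>
      intro K A hS
      exact .mp (.mp (.ax2 _ _ _) (ih1 K A hS)) (ih2 K A hS)
  exact main _ _ h K A rfl

/-- Deduction theorem, packaged: to prove `A → B`, assume `A` in any extension. -/
theorem ded' {K : Set PFrm} {A B : PFrm}
    (f : ∀ K', K ⊆ K' → PDeriv K' A → PDeriv K' B) : PDeriv K (A.imp B) :=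
  ded (f _ (Set.subset_insert _ _) (.hyp (Set.mem_insert _ _)))

theorem mp2 {K : Set PFrm} {A B C : PFrm} (h : PDeriv K (A.imp (B.imp C)))
    (a : PDeriv K A) (b : PDeriv K B) : PDeriv K C := .mp (.mp h a) b

theorem impTrans {K : Set PFrm} {A B C : PFrm} (h1 : PDeriv K (A.imp B))
    (h2 : PDeriv K (B.imp C)) : PDeriv K (A.imp C) :=
  ded' fun _ hs a => .mp (h2.wk hs) (.mp (h1.wk hs) a)

theorem andI {K : Set PFrm} {A B : PFrm} (a : PDeriv K A) (b : PDeriv K B) :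
    PDeriv K (A.and B) := mp2 (.ax9 A B) a b

theorem andE1 {K : Set PFrm} {A B : PFrm} (h : PDeriv K (A.and B)) : PDeriv K A :=
  .mp (.ax7 A B) h

theorem andE2 {K : Set PFrm} {A B : PFrm} (h : PDeriv K (A.and B)) : PDeriv K B :=
  .mp (.ax8 A B) h

theorem iffI {K : Set PFrm} {A B : PFrm} (h1 : PDeriv K (A.imp B))
    (h2 : PDeriv K (B.imp A)) : PDeriv K (A.iffF B) := andI h1 h2

theorem iff1 {K : Set PFrm} {A B : PFrm} (h : PDeriv K (A.iffF B)) :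
    PDeriv K (A.imp B) := andE1 h

theorem iff2 {K : Set PFrm} {A B : PFrm} (h : PDeriv K (A.iffF B)) :
    PDeriv K (B.imp A) := andE2 h

theorem iffRefl {K : Set PFrm} (A : PFrm) : PDeriv K (A.iffF A) := iffI (pid A) (pid A)

theorem iffSymm {K : Set PFrm} {A B : PFrm} (h : PDeriv K (A.iffF B)) :
    PDeriv K (B.iffF A) := iffI (iff2 h) (iff1 h)

theorem iffTrans {K : Set PFrm} {A B C : PFrm} (h1 : PDeriv K (A.iffF B))
    (h2 : PDeriv K (B.iffF C)) : PDeriv K (A.iffF C) :=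
  iffI (impTrans (iff1 h1) (iff1 h2)) (impTrans (iff2 h2) (iff2 h1))

theorem impCong {K : Set PFrm} {A A' B B' : PFrm} (h1 : PDeriv K (A.iffF A'))
    (h2 : PDeriv K (B.iffF B')) : PDeriv K ((A.imp B).iffF (A'.imp B')) := by
  apply iffI
  · exact ded' fun K1 s1 hab => ded' fun K2 s2 ha' =>
      .mp ((iff1 h2).wk (s1.trans s2))
        (.mp (hab.wk s2) (.mp ((iff2 h1).wk (s1.trans s2)) ha'))
  · exact ded' fun K1 s1 hab => ded' fun K2 s2 ha =>
      .mp ((iff2 h2).wk (s1.trans s2))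
        (.mp (hab.wk s2) (.mp ((iff1 h1).wk (s1.trans s2)) ha))

theorem orCong {K : Set PFrm} {A A' B B' : PFrm} (h1 : PDeriv K (A.iffF A'))
    (h2 : PDeriv K (B.iffF B')) : PDeriv K ((A.or B).iffF (A'.or B')) := by
  apply iffI
  · exact mp2 (.ax6 A B (A'.or B')) (impTrans (iff1 h1) (.ax4 A' B'))
      (impTrans (iff1 h2) (.ax5 B' A'))
  · exact mp2 (.ax6 A' B' (A.or B)) (impTrans (iff2 h1) (.ax4 A B))
      (impTrans (iff2 h2) (.ax5 B A))

theorem andCong {K : Set PFrm} {A A' B B' : PFrm} (h1 : PDeriv K (A.iffF A'))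
    (h2 : PDeriv K (B.iffF B')) : PDeriv K ((A.and B).iffF (A'.and B')) := by
  apply iffI
  · exact ded' fun K1 s1 h =>
      andI (.mp ((iff1 h1).wk s1) (andE1 h)) (.mp ((iff1 h2).wk s1) (andE2 h))
  · exact ded' fun K1 s1 h =>
      andI (.mp ((iff2 h1).wk s1) (andE1 h)) (.mp ((iff2 h2).wk s1) (andE2 h))

theorem andAssoc {K : Set PFrm} (A B C : PFrm) :
    PDeriv K ((A.and (B.and C)).iffF ((A.and B).and C)) := by
  apply iffI
  · exact ded' fun K1 _ h =>
      andI (andI (andE1 h) (andE1 (andE2 h))) (andE2 (andE2 h))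
  · exact ded' fun K1 _ h =>
      andI (andE1 (andE1 h)) (andI (andE2 (andE1 h)) (andE2 h))

/-- `P → (Q & R)` is equivalent to `(P → Q) & (P → R)`. -/
theorem impAnd {K : Set PFrm} (P Q R : PFrm) :
    PDeriv K ((P.imp (Q.and R)).iffF ((P.imp Q).and (P.imp R))) := by
  apply iffI
  · exact ded' fun K1 _ h =>
      andI (impTrans h (.ax7 Q R)) (impTrans h (.ax8 Q R))
  · exact ded' fun K1 _ h => ded' fun K2 s p =>
      andI (.mp ((andE1 h).wk s) p) (.mp ((andE2 h).wk s) p)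

/-- Currying: `(Q & R) → S` is equivalent to `Q → (R → S)`. -/
theorem curry1 {K : Set PFrm} (Q R S : PFrm) :
    PDeriv K (((Q.and R).imp S).iffF (Q.imp (R.imp S))) := by
  apply iffI
  · exact ded' fun K1 _ h => ded' fun K2 s2 q => ded' fun K3 s3 r =>
      .mp (h.wk (s2.trans s3)) (andI (q.wk s3) r)
  · exact ded' fun K1 _ h => ded' fun K2 s2 qr =>
      .mp (.mp (h.wk s2) (andE1 qr)) (andE2 qr)

/-- `(Q & R) ∨ S` is equivalent to `(Q ∨ S) & (R ∨ S)`. -/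
theorem orAndL {K : Set PFrm} (Q R S : PFrm) :
    PDeriv K (((Q.and R).or S).iffF ((Q.or S).and (R.or S))) := by
  apply iffI
  · refine mp2 (.ax6 (Q.and R) S ((Q.or S).and (R.or S))) ?_ ?_
    · exact ded' fun K1 _ h =>
        andI (.mp (.ax4 Q S) (andE1 h)) (.mp (.ax4 R S) (andE2 h))
    · exact ded' fun K1 _ s =>
        andI (.mp (.ax5 S Q) s) (.mp (.ax5 S R) s)
  · refine ded' fun K1 _ h => ?_
    refine .mp (mp2 (.ax6 Q S ((Q.and R).or S)) ?_ (.ax5 S (Q.and R))) (andE1 h)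
    refine ded' fun K2 s2 q => ?_
    refine .mp (mp2 (.ax6 R S ((Q.and R).or S)) ?_ (.ax5 S (Q.and R))) ((andE2 h).wk s2)
    exact ded' fun K3 s3 r => .mp (.ax4 (Q.and R) S) (andI (q.wk s3) r)

theorem orComm {K : Set PFrm} (A B : PFrm) : PDeriv K ((A.or B).iffF (B.or A)) :=
  iffI (mp2 (.ax6 A B (B.or A)) (.ax5 A B) (.ax4 B A))
    (mp2 (.ax6 B A (A.or B)) (.ax5 B A) (.ax4 A B))

/-- `S ∨ (Q & R)` is equivalent to `(S ∨ Q) & (S ∨ R)`. -/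
theorem orAndR {K : Set PFrm} (S Q R : PFrm) :
    PDeriv K ((S.or (Q.and R)).iffF ((S.or Q).and (S.or R))) :=
  iffTrans (orComm S (Q.and R)) (iffTrans (orAndL Q R S)
    (andCong (orComm Q S) (orComm R S)))

theorem conjAppend {K : Set PFrm} :
    ∀ (l : List PFrm) (B C : PFrm) (m : List PFrm),
      PDeriv K ((B.bigConj (l ++ C :: m)).iffF ((B.bigConj l).and (C.bigConj m)))
  | [], B, C, m => iffRefl _
  | X :: l, B, C, m =>
    iffTrans (andCong (iffRefl B) (conjAppend l X C m))
      (andAssoc B (X.bigConj l) (C.bigConj m))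

/-- `(B & l) → D` is equivalent to the curried `B → (l →… → D)`. -/
theorem curryConj {K : Set PFrm} :
    ∀ (l : List PFrm) (B D : PFrm),
      PDeriv K (((B.bigConj l).imp D).iffF (B.imp (l.foldr .imp D)))
  | [], B, D => iffRefl _
  | X :: l, B, D =>
    iffTrans (curry1 B (X.bigConj l) D)
      (impCong (iffRefl B) (curryConj l X D))

/-- `P ∨ (C & m)` is equivalent to the conjunction of the `P ∨ Cᵢ`. -/
theorem orConjR {K : Set PFrm} :
    ∀ (m : List PFrm) (P C : PFrm),
      PDeriv K ((P.or (C.bigConj m)).iffF ((P.or C).bigConj (m.map (P.or ·))))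
  | [], P, C => iffRefl _
  | D :: m, P, C =>
    iffTrans (orAndR P C (D.bigConj m))
      (andCong (iffRefl (P.or C)) (orConjR m P D))

theorem foldr_imp_noAnd : ∀ (l : List PFrm) (D : PFrm),
    (∀ X ∈ l, X.noAnd) → D.noAnd → (l.foldr .imp D).noAnd
  | [], D, _, hD => hD
  | X :: l, D, hl, hD =>
    ⟨hl X (by simp), foldr_imp_noAnd l D (fun Y hY => hl Y (by simp [hY])) hD⟩

/-- Turning `(B & l) → (C & m)` into a conjunction of `&`-free formulas. -/
theorem expandImp {K : Set PFrm} :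
    ∀ (m : List PFrm) (C B : PFrm) (l : List PFrm),
      B.noAnd → (∀ X ∈ l, X.noAnd) → C.noAnd → (∀ X ∈ m, X.noAnd) →
      ∃ (B' : PFrm) (l' : List PFrm), B'.noAnd ∧ (∀ X ∈ l', X.noAnd) ∧
        PDeriv K (((B.bigConj l).imp (C.bigConj m)).iffF (B'.bigConj l'))
  | [], C, B, l, hB, hl, hC, _ =>
    ⟨B.imp (l.foldr .imp C), [], ⟨hB, foldr_imp_noAnd l C hl hC⟩, by simp,
      curryConj l B C⟩
  | D :: m, C, B, l, hB, hl, hC, hm => by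
    obtain ⟨B2, l2, hB2, hl2, d2⟩ := expandImp (K := K) m D B l hB hl
      (hm D (by simp)) (fun X hX => hm X (by simp [hX]))
    refine ⟨B.imp (l.foldr .imp C), B2 :: l2,
      ⟨hB, foldr_imp_noAnd l C hl hC⟩, ?_, ?_⟩
    · intro X hX
      rcases List.mem_cons.mp hX with h | h
      · exact h ▸ hB2
      · exact hl2 X h
    · exact iffTrans (impAnd (B.bigConj l) C (D.bigConj m))
        (andCong (curryConj l B C) d2)

/-- Turning `(B & l) ∨ (C & m)` into a conjunction of `&`-free formulas. -/
theorem expandOr {K : Set PFrm} :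
    ∀ (l : List PFrm) (B C : PFrm) (m : List PFrm),
      B.noAnd → (∀ X ∈ l, X.noAnd) → C.noAnd → (∀ X ∈ m, X.noAnd) →
      ∃ (B' : PFrm) (l' : List PFrm), B'.noAnd ∧ (∀ X ∈ l', X.noAnd) ∧
        PDeriv K (((B.bigConj l).or (C.bigConj m)).iffF (B'.bigConj l'))
  | [], B, C, m, hB, _, hC, hm =>
    ⟨B.or C, m.map (B.or ·), ⟨hB, hC⟩, by
      intro X hX
      simp only [List.mem_map] at hX
      obtain ⟨Y, hY, rfl⟩ := hX
      exact ⟨hB, hm Y hY⟩,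
      orConjR m B C⟩
  | X :: l, B, C, m, hB, hl, hC, hm => by
    obtain ⟨B2, l2, hB2, hl2, d2⟩ := expandOr (K := K) l X C m
      (hl X (by simp)) (fun Y hY => hl Y (by simp [hY])) hC hm
    refine ⟨B.or C, (m.map (B.or ·)) ++ B2 :: l2, ⟨hB, hC⟩, ?_, ?_⟩
    · intro Y hY
      rcases List.mem_append.mp hY with h | h
      · simp only [List.mem_map] at h
        obtain ⟨Z, hZ, rfl⟩ := h
        exact ⟨hB, hm Z hZ⟩
      · rcases List.mem_cons.mp h with h | h
        · exact h ▸ hB2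
        · exact hl2 Y h
    · refine iffTrans (orAndL B (X.bigConj l) (C.bigConj m)) ?_
      refine iffTrans (andCong (orConjR m B C) d2) ?_
      exact iffSymm (conjAppend (m.map (B.or ·)) (B.or C) B2 l2)

end PFrm

theorem stmt19 (A : PFrm) :
    ∃ (B : PFrm) (l : List PFrm), B.noAnd ∧ (∀ C ∈ l, C.noAnd) ∧
      PDeriv ∅ (A.iffF (B.bigConj l)) := by
  induction A with
  | atom n => exact ⟨.atom n, [], trivial, by simp, PFrm.iffRefl _⟩
  | imp A1 A2 ih1 ih2 =>
    obtain ⟨B1, l1, hB1, hl1, d1⟩ := ih1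
    obtain ⟨B2, l2, hB2, hl2, d2⟩ := ih2
    obtain ⟨B', l', hB', hl', d⟩ := PFrm.expandImp (K := ∅) l2 B2 B1 l1 hB1 hl1 hB2 hl2
    exact ⟨B', l', hB', hl', PFrm.iffTrans (PFrm.impCong d1 d2) d⟩
  | or A1 A2 ih1 ih2 =>
    obtain ⟨B1, l1, hB1, hl1, d1⟩ := ih1
    obtain ⟨B2, l2, hB2, hl2, d2⟩ := ih2
    obtain ⟨B', l', hB', hl', d⟩ := PFrm.expandOr (K := ∅) l1 B1 B2 l2 hB1 hl1 hB2 hl2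
    exact ⟨B', l', hB', hl', PFrm.iffTrans (PFrm.orCong d1 d2) d⟩
  | and A1 A2 ih1 ih2 =>
    obtain ⟨B1, l1, hB1, hl1, d1⟩ := ih1
    obtain ⟨B2, l2, hB2, hl2, d2⟩ := ih2
    refine ⟨B1, l1 ++ B2 :: l2, hB1, ?_, ?_⟩
    · intro C hC
      rcases List.mem_append.mp hC with h | h
      · exact hl1 C h
      · rcases List.mem_cons.mp h with h | h
        · exact h ▸ hB2
        · exact hl2 C h
    · exact PFrm.iffTrans (PFrm.andCong d1 d2)
        (PFrm.iffSymm (PFrm.conjAppend l1 B1 B2 l2))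
end
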